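/- arXiv:2310.02507 — 2 statements merged into one kernel-verified Lean document; each statement's English description precedes it below -/
import Mathlib

section
/- Consider n units with outcomes O_i ∈ ℝ, binary regressors Z_i ∈ {0,1} (with n_1 = Σ Z_i ≥ 1 units having Z_i = 1 and n_0 = n − n_1 ≥ 1 units having Z_i = 0), and centered covariates x_i* ∈ ℝ^K. Assume the n × (2K+2) design matrix with ith row (1, Z_i, x_i*ᵀ, Z_i x_i*ᵀ) has full column rank (which entails the arm-wise design matrices with rows (1, x_i*ᵀ) have full column rank). Then the OLS coefficient on Z_i in the regression of O_i on (1, Z_i, x_i*, Z_i x_i*) over all units equals (1/n_1) Σ_{Z_i=1} (O_i − β̂_{O,1}ᵀ x_i*) − (1/n_0) Σ_{Z_i=0} (O_i − β̂_{O,0}ᵀ x_i*), where β̂_{O,z} is the OLS coefficient vector on x_i* in the regression of O_i on (1, x_i*) using only units with Z_i = z. -/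
open Finset Matrix

/-- The units assigned to arm `z`. -/
def arm (n : ℕ) (Z : Fin n → Bool) (z : Bool) : Finset (Fin n) :=
  Finset.univ.filter (fun i => Z i = z)

/-- Column index type for the full design matrix `(1, Z, x*, Z x*)`. -/
abbrev Cols (K : ℕ) := Unit ⊕ Unit ⊕ Fin K ⊕ Fin K

/-- The column corresponding to the coefficient on `Z`. -/
def zIdx (K : ℕ) : Cols K := Sum.inr (Sum.inl ())

/-- The `n × (2K+2)` design matrix with ith row `(1, Z_i, x_i*ᵀ, Z_i x_i*ᵀ)`. -/
def design (n K : ℕ) (xs : Fin n → Fin K → ℝ) (Z : Fin n → Bool) :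
    Matrix (Fin n) (Cols K) ℝ :=
  Matrix.of fun i c =>
    match c with
    | Sum.inl _ => 1
    | Sum.inr (Sum.inl _) => if Z i then 1 else 0
    | Sum.inr (Sum.inr (Sum.inl k)) => xs i k
    | Sum.inr (Sum.inr (Sum.inr k)) => (if Z i then (1 : ℝ) else 0) * xs i k

/-- The arm-wise design matrix with rows `(1, x_i*ᵀ)` over the units with `Z_i = z`. -/
def armDesign (n K : ℕ) (xs : Fin n → Fin K → ℝ) (Z : Fin n → Bool) (z : Bool) :
    Matrix {i : Fin n // Z i = z} (Unit ⊕ Fin K) ℝ :=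
  Matrix.of fun i c =>
    match c with
    | Sum.inl _ => 1
    | Sum.inr k => xs i.1 k

/-- The arm-wise OLS slope coefficient vector on the covariates, from regressing `O` on an
intercept and the covariates using only units with `Z_i = z`. -/
noncomputable def armSlope (n K : ℕ) (xs : Fin n → Fin K → ℝ) (Z : Fin n → Bool) (z : Bool)
    (O : Fin n → ℝ) : Fin K → ℝ :=
  fun k =>
    (((armDesign n K xs Z z)ᵀ * armDesign n K xs Z z)⁻¹.mulVec
      ((armDesign n K xs Z z)ᵀ.mulVec (fun i => O i.1))) (Sum.inr k)

-- aux lemmas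
variable {n K : ℕ}

lemma design_mulVec_apply (xs : Fin n → Fin K → ℝ) (Z : Fin n → Bool)
    (v : Cols K → ℝ) (i : Fin n) :
    (design n K xs Z).mulVec v i =
      if Z i then
        (v (Sum.inl ()) + v (Sum.inr (Sum.inl ())))
          + ∑ k, (v (Sum.inr (Sum.inr (Sum.inl k))) + v (Sum.inr (Sum.inr (Sum.inr k)))) * xs i k
      else v (Sum.inl ()) + ∑ k, v (Sum.inr (Sum.inr (Sum.inl k))) * xs i k := by
  cases hZ : Z i <;>
    simp [design, Matrix.mulVec, dotProduct, Fintype.sum_sum_type, hZ, add_mul,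
      Finset.sum_add_distrib, mul_comm, mul_add, add_assoc]

lemma armDesign_mulVec_apply (xs : Fin n → Fin K → ℝ) (Z : Fin n → Bool) (z : Bool)
    (w : Unit ⊕ Fin K → ℝ) (i : {i : Fin n // Z i = z}) :
    (armDesign n K xs Z z).mulVec w i = w (Sum.inl ()) + ∑ k, w (Sum.inr k) * xs i.1 k := by
  simp [armDesign, Matrix.mulVec, dotProduct, Fintype.sum_sum_type, mul_comm]

lemma transpose_mulVec_apply {m p : Type*} [Fintype m] (M : Matrix m p ℝ) (u : m → ℝ) (c : p) :
    Mᵀ.mulVec u c = ∑ i, M i c * u i := by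
  simp [Matrix.mulVec, dotProduct, Matrix.transpose_apply]

lemma design_inj (xs : Fin n → Fin K → ℝ) (Z : Fin n → Bool)
    (hrank : IsUnit ((design n K xs Z)ᵀ * design n K xs Z).det)
    (v : Cols K → ℝ) (hv : (design n K xs Z).mulVec v = 0) : v = 0 := by
  have h : ((design n K xs Z)ᵀ * design n K xs Z).mulVec v = 0 := by
    rw [← Matrix.mulVec_mulVec, hv, Matrix.mulVec_zero]
  have h2 := congrArg (fun u => ((design n K xs Z)ᵀ * design n K xs Z)⁻¹.mulVec u) h
  simpa [Matrix.mulVec_mulVec, Matrix.nonsing_inv_mul _ hrank, Matrix.one_mulVec] using h2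

lemma armGram_isUnit (xs : Fin n → Fin K → ℝ) (Z : Fin n → Bool)
    (hrank : IsUnit ((design n K xs Z)ᵀ * design n K xs Z).det) (z : Bool) :
    IsUnit ((armDesign n K xs Z z)ᵀ * armDesign n K xs Z z).det := by
  rw [isUnit_iff_ne_zero]
  intro h
  obtain ⟨w, hw0, hw⟩ := Matrix.exists_mulVec_eq_zero_iff.mpr h
  set a := armDesign n K xs Z z with ha
  have haw : a.mulVec w = 0 := by
    have h2 : (a.mulVec w) ⬝ᵥ (a.mulVec w) = 0 := by
      rw [dotProduct_mulVec, ← Matrix.mulVec_transpose, Matrix.mulVec_mulVec, hw,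
        zero_dotProduct]
    exact dotProduct_self_eq_zero.mp h2
  -- extend w to a kernel vector of the full design
  set v : Cols K → ℝ := fun c =>
    match c with
    | Sum.inl _ => if z then 0 else w (Sum.inl ())
    | Sum.inr (Sum.inl _) => if z then w (Sum.inl ()) else -w (Sum.inl ())
    | Sum.inr (Sum.inr (Sum.inl k)) => if z then 0 else w (Sum.inr k)
    | Sum.inr (Sum.inr (Sum.inr k)) => if z then w (Sum.inr k) else -w (Sum.inr k)
    with hv
  have hDv : (design n K xs Z).mulVec v = 0 := by
    funext i
    rw [design_mulVec_apply]
    cases hz : Z i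
    · cases z
      · have := congrFun haw ⟨i, hz⟩
        rw [armDesign_mulVec_apply] at this
        simpa [hv] using this
      · simp [hv]
    · cases z
      · simp [hv]
      · have := congrFun haw ⟨i, hz⟩
        rw [armDesign_mulVec_apply] at this
        simpa [hv] using this
  have hv0 := design_inj xs Z hrank v hDv
  apply hw0
  funext c
  cases c with
  | inl u =>
    cases u
    have h1 := congrFun hv0 (Sum.inr (Sum.inl ()))
    cases z <;> simpa [hv] using h1
  | inr k =>
    have h1 := congrFun hv0 (Sum.inr (Sum.inr (Sum.inr k)))
    cases z <;> simpa [hv] using h1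

noncomputable def armCoef (n K : ℕ) (xs : Fin n → Fin K → ℝ) (Z : Fin n → Bool) (z : Bool)
    (O : Fin n → ℝ) : Unit ⊕ Fin K → ℝ :=
  (((armDesign n K xs Z z)ᵀ * armDesign n K xs Z z)⁻¹).mulVec
    ((armDesign n K xs Z z)ᵀ.mulVec (fun i => O i.1))

/-- the arm-wise fitted value -/
noncomputable def fitArm (n K : ℕ) (xs : Fin n → Fin K → ℝ) (Z : Fin n → Bool) (z : Bool)
    (O : Fin n → ℝ) : Fin n → ℝ :=
  fun i => armCoef n K xs Z z O (Sum.inl ()) + ∑ k, armCoef n K xs Z z O (Sum.inr k) * xs i k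

lemma sum_arm_eq (Z : Fin n → Bool) (z : Bool) (f : Fin n → ℝ) :
    ∑ i ∈ arm n Z z, f i = ∑ i : {i : Fin n // Z i = z}, f i.1 :=
  Finset.sum_subtype _ (by simp [arm]) f

lemma arm_NE (xs : Fin n → Fin K → ℝ) (Z : Fin n → Bool) (z : Bool) (O : Fin n → ℝ)
    (hz : IsUnit ((armDesign n K xs Z z)ᵀ * armDesign n K xs Z z).det)
    (c : Unit ⊕ Fin K) :
    ∑ i : {i : Fin n // Z i = z},
      armDesign n K xs Z z i c * (O i.1 - fitArm n K xs Z z O i.1) = 0 := by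
  set a := armDesign n K xs Z z with ha
  have NE : aᵀ.mulVec (a.mulVec (armCoef n K xs Z z O)) = aᵀ.mulVec (fun i => O i.1) := by
    rw [Matrix.mulVec_mulVec]
    show (aᵀ * a).mulVec (((aᵀ * a)⁻¹).mulVec (aᵀ.mulVec (fun i => O i.1))) = _
    rw [Matrix.mulVec_mulVec, Matrix.mul_nonsing_inv _ hz, Matrix.one_mulVec]
  have h := congrFun NE c
  rw [transpose_mulVec_apply, transpose_mulVec_apply] at h
  have hfit : ∀ i : {i : Fin n // Z i = z}, (a.mulVec (armCoef n K xs Z z O)) i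
      = fitArm n K xs Z z O i.1 := by
    intro i; rw [armDesign_mulVec_apply]; rfl
  simp only [hfit] at h
  simp only [mul_sub, Finset.sum_sub_distrib, h, sub_self]

lemma arm_resid_intercept (xs : Fin n → Fin K → ℝ) (Z : Fin n → Bool) (z : Bool) (O : Fin n → ℝ)
    (hz : IsUnit ((armDesign n K xs Z z)ᵀ * armDesign n K xs Z z).det) :
    ∑ i ∈ arm n Z z, (O i - fitArm n K xs Z z O i) = 0 := by
  rw [sum_arm_eq]
  simpa [armDesign] using arm_NE xs Z z O hz (Sum.inl ())

lemma arm_resid_slope (xs : Fin n → Fin K → ℝ) (Z : Fin n → Bool) (z : Bool) (O : Fin n → ℝ)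
    (hz : IsUnit ((armDesign n K xs Z z)ᵀ * armDesign n K xs Z z).det) (k : Fin K) :
    ∑ i ∈ arm n Z z, xs i k * (O i - fitArm n K xs Z z O i) = 0 := by
  rw [sum_arm_eq]
  simpa [armDesign] using arm_NE xs Z z O hz (Sum.inr k)

lemma hsplit (Z : Fin n → Bool) (f : Fin n → ℝ) :
    ∑ i, f i = ∑ i ∈ arm n Z true, f i + ∑ i ∈ arm n Z false, f i := by
  rw [← Finset.sum_filter_add_sum_filter_not Finset.univ (fun i => Z i = true) f]
  congr 1
  apply Finset.sum_congr _ (fun _ _ => rfl)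
  ext i; simp [arm]

lemma hmean (xs : Fin n → Fin K → ℝ) (Z : Fin n → Bool) (z : Bool) (O : Fin n → ℝ)
    (hz : IsUnit ((armDesign n K xs Z z)ᵀ * armDesign n K xs Z z).det)
    (hcard : 1 ≤ (arm n Z z).card) :
    (∑ i ∈ arm n Z z, (O i - ∑ k, armSlope n K xs Z z O k * xs i k)) / ((arm n Z z).card : ℝ)
      = armCoef n K xs Z z O (Sum.inl ()) := by
  have hc0 : ((arm n Z z).card : ℝ) ≠ 0 := by
    exact_mod_cast Nat.one_le_iff_ne_zero.mp hcard
  rw [div_eq_iff hc0]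
  have hres := arm_resid_intercept xs Z z O hz
  have hterm : ∀ i, O i - fitArm n K xs Z z O i
      = (O i - ∑ k, armSlope n K xs Z z O k * xs i k) - armCoef n K xs Z z O (Sum.inl ()) := by
    intro i
    have : armSlope n K xs Z z O = fun k => armCoef n K xs Z z O (Sum.inr k) := rfl
    rw [this]; simp [fitArm]; ring
  simp only [hterm, Finset.sum_sub_distrib, Finset.sum_const, nsmul_eq_mul] at hres
  rw [Finset.sum_sub_distrib]
  linarith


/-- the OLS coefficient on `Z_i` in the fully interacted regression equals the
difference of arm-wise regression-adjusted means. -/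
theorem ols_interact_coeff (n K : ℕ) (O : Fin n → ℝ) (Z : Fin n → Bool)
    (xs : Fin n → Fin K → ℝ)
    -- the covariates are centered
    (hcent : ∀ k, ∑ i, xs i k = 0)
    -- both arms are nonempty
    (hn1 : 1 ≤ (arm n Z true).card) (hn0 : 1 ≤ (arm n Z false).card)
    -- the full design matrix has full column rank
    (hrank : IsUnit ((design n K xs Z)ᵀ * design n K xs Z).det) :
    (((design n K xs Z)ᵀ * design n K xs Z)⁻¹.mulVec
        ((design n K xs Z)ᵀ.mulVec O)) (zIdx K)
      = (∑ i ∈ arm n Z true, (O i - ∑ k, armSlope n K xs Z true O k * xs i k))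
          / ((arm n Z true).card : ℝ)
        - (∑ i ∈ arm n Z false, (O i - ∑ k, armSlope n K xs Z false O k * xs i k))
          / ((arm n Z false).card : ℝ) := by
  classical
  have h1 := armGram_isUnit xs Z hrank true
  have h0 := armGram_isUnit xs Z hrank false
  set β1 := armCoef n K xs Z true O with hβ1
  set β0 := armCoef n K xs Z false O with hβ0
  set βf : Cols K → ℝ := fun c =>
    match c with
    | Sum.inl _ => β0 (Sum.inl ())
    | Sum.inr (Sum.inl _) => β1 (Sum.inl ()) - β0 (Sum.inl ())
    | Sum.inr (Sum.inr (Sum.inl k)) => β0 (Sum.inr k)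
    | Sum.inr (Sum.inr (Sum.inr k)) => β1 (Sum.inr k) - β0 (Sum.inr k)
    with hβf
  have hfit : ∀ i, (design n K xs Z).mulVec βf i
      = if Z i then fitArm n K xs Z true O i else fitArm n K xs Z false O i := by
    intro i
    rw [design_mulVec_apply]
    cases hz : Z i <;> simp [hβf, fitArm, hβ1, hβ0]
  have hre : ∀ (z : Bool), ∀ i ∈ arm n Z z,
      (design n K xs Z).mulVec βf i = fitArm n K xs Z z O i := by
    intro z i hi
    have hz : Z i = z := by simpa [arm] using hi
    rw [hfit i, hz]; cases z <;> simp
  have hmem : ∀ (z : Bool), ∀ i ∈ arm n Z z, Z i = z := by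
    intro z i hi; simpa [arm] using hi
  have resid : ∀ c : Cols K,
      ∑ i, design n K xs Z i c * (O i - (design n K xs Z).mulVec βf i) = 0 := by
    intro c
    rw [hsplit Z]
    cases c with
    | inl u =>
      have t1 : ∑ i ∈ arm n Z true,
          design n K xs Z i (Sum.inl u) * (O i - (design n K xs Z).mulVec βf i)
          = ∑ i ∈ arm n Z true, (O i - fitArm n K xs Z true O i) :=
        Finset.sum_congr rfl fun i hi => by rw [hre true i hi]; simp [design]
      have t0 : ∑ i ∈ arm n Z false,
          design n K xs Z i (Sum.inl u) * (O i - (design n K xs Z).mulVec βf i)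
          = ∑ i ∈ arm n Z false, (O i - fitArm n K xs Z false O i) :=
        Finset.sum_congr rfl fun i hi => by rw [hre false i hi]; simp [design]
      rw [t1, t0, arm_resid_intercept xs Z true O h1, arm_resid_intercept xs Z false O h0,
        add_zero]
    | inr c' =>
      cases c' with
      | inl u =>
        have t1 : ∑ i ∈ arm n Z true,
            design n K xs Z i (Sum.inr (Sum.inl u)) * (O i - (design n K xs Z).mulVec βf i)
            = ∑ i ∈ arm n Z true, (O i - fitArm n K xs Z true O i) :=
          Finset.sum_congr rfl fun i hi => by
            rw [hre true i hi]; simp [design, hmem true i hi]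
        have t0 : ∑ i ∈ arm n Z false,
            design n K xs Z i (Sum.inr (Sum.inl u)) * (O i - (design n K xs Z).mulVec βf i)
            = 0 :=
          Finset.sum_eq_zero fun i hi => by simp [design, hmem false i hi]
        rw [t1, t0, arm_resid_intercept xs Z true O h1, add_zero]
      | inr c'' =>
        cases c'' with
        | inl k =>
          have t1 : ∑ i ∈ arm n Z true,
              design n K xs Z i (Sum.inr (Sum.inr (Sum.inl k))) *
                (O i - (design n K xs Z).mulVec βf i)
              = ∑ i ∈ arm n Z true, xs i k * (O i - fitArm n K xs Z true O i) :=
            Finset.sum_congr rfl fun i hi => by rw [hre true i hi]; simp [design]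
          have t0 : ∑ i ∈ arm n Z false,
              design n K xs Z i (Sum.inr (Sum.inr (Sum.inl k))) *
                (O i - (design n K xs Z).mulVec βf i)
              = ∑ i ∈ arm n Z false, xs i k * (O i - fitArm n K xs Z false O i) :=
            Finset.sum_congr rfl fun i hi => by rw [hre false i hi]; simp [design]
          rw [t1, t0, arm_resid_slope xs Z true O h1 k, arm_resid_slope xs Z false O h0 k,
            add_zero]
        | inr k =>
          have t1 : ∑ i ∈ arm n Z true,
              design n K xs Z i (Sum.inr (Sum.inr (Sum.inr k))) *
                (O i - (design n K xs Z).mulVec βf i)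
              = ∑ i ∈ arm n Z true, xs i k * (O i - fitArm n K xs Z true O i) :=
            Finset.sum_congr rfl fun i hi => by
              rw [hre true i hi]; simp [design, hmem true i hi]
          have t0 : ∑ i ∈ arm n Z false,
              design n K xs Z i (Sum.inr (Sum.inr (Sum.inr k))) *
                (O i - (design n K xs Z).mulVec βf i)
              = 0 :=
            Finset.sum_eq_zero fun i hi => by simp [design, hmem false i hi]
          rw [t1, t0, arm_resid_slope xs Z true O h1 k, add_zero]
  have DNE : ((design n K xs Z)ᵀ * design n K xs Z).mulVec βf
      = (design n K xs Z)ᵀ.mulVec O := by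
    funext c
    rw [← Matrix.mulVec_mulVec, transpose_mulVec_apply, transpose_mulVec_apply]
    have h := resid c
    simp only [mul_sub, Finset.sum_sub_distrib, sub_eq_zero] at h
    exact h.symm
  have main : (((design n K xs Z)ᵀ * design n K xs Z)⁻¹).mulVec
      ((design n K xs Z)ᵀ.mulVec O) = βf := by
    rw [← DNE, Matrix.mulVec_mulVec, Matrix.nonsing_inv_mul _ hrank, Matrix.one_mulVec]
  rw [main, hmean xs Z true O h1 hn1, hmean xs Z false O h0 hn0]
  rfl
end

section
/- In a finite population of n units satisfying monotonicity and the exclusion restriction, with n_co > 0 compliers, the sample CACE equals the ratio of sample intention-to-treat effects: (1/n) Σ_{i=1}^n (W_i(1) − W_i(0)) = n_co/n, (1/n) Σ_{i=1}^n (Y_i(W_i(1)) − Y_i(W_i(0))) = (n_co/n)·τ, and hence τ = [(1/n) Σ_i (Y_i(W_i(1)) − Y_i(W_i(0)))] / [(1/n) Σ_i (W_i(1) − W_i(0))]. In particular, Σ_{compliers} (Y_i(1) − Y_i(0)) = Σ_{i=1}^n (Y_i(W_i(1)) − Y_i(W_i(0))). -/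
open Finset

/-- The compliers: units with `W i 1 = 1` and `W i 0 = 0`. -/
def compliers (n : ℕ) (W : Fin n → Bool → Bool) : Finset (Fin n) :=
  Finset.univ.filter (fun i => W i true = true ∧ W i false = false)

/-- Real-valued treatment received under assignment `z`. -/
def wR {n : ℕ} (W : Fin n → Bool → Bool) (z : Bool) (i : Fin n) : ℝ :=
  if W i z then 1 else 0

/-- The sample complier average causal effect. -/
noncomputable def sampCACE (n : ℕ) (W : Fin n → Bool → Bool) (Y : Fin n → Bool → ℝ) : ℝ :=
  (∑ i ∈ compliers n W, (Y i true - Y i false)) / ((compliers n W).card : ℝ)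

/-- the sample CACE equals the ratio of the sample intention-to-treat effects. -/
theorem sampCACE_eq_ratio (n : ℕ) (W : Fin n → Bool → Bool) (Y : Fin n → Bool → ℝ)
    -- monotonicity: no defiers
    (hmono : ∀ i : Fin n, W i false = true → W i true = true)
    -- there are compliers
    (hco : 0 < (compliers n W).card) :
    -- sample ITT effect on treatment received equals the fraction of compliers
    (∑ i, (wR W true i - wR W false i)) / (n : ℝ)
        = ((compliers n W).card : ℝ) / (n : ℝ) ∧
    -- sample ITT effect on the outcome equals `p_co^samp · τ`
    (∑ i, (Y i (W i true) - Y i (W i false))) / (n : ℝ)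
        = (((compliers n W).card : ℝ) / (n : ℝ)) * sampCACE n W Y ∧
    -- the sample CACE is the ratio of the two sample ITT effects
    sampCACE n W Y
        = ((∑ i, (Y i (W i true) - Y i (W i false))) / (n : ℝ))
          / ((∑ i, (wR W true i - wR W false i)) / (n : ℝ)) ∧
    -- sum over compliers equals sum over all units
    (∑ i ∈ compliers n W, (Y i true - Y i false))
        = ∑ i, (Y i (W i true) - Y i (W i false)) := by

  have hn : 0 < n := by
    rcases Finset.card_pos.mp hco with ⟨i, _⟩
    exact i.pos
  have hnR : (n : ℝ) ≠ 0 := Nat.cast_ne_zero.mpr hn.ne'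
  have key : ∀ i : Fin n, i ∉ compliers n W → W i true = W i false := by
    intro i hi
    simp only [compliers, Finset.mem_filter, Finset.mem_univ, true_and, not_and] at hi
    cases h0 : W i false with
    | true => rw [hmono i h0]
    | false =>
      cases h1 : W i true with
      | true => exact absurd h0 (hi h1)
      | false => rfl
  have hW : (∑ i, (wR W true i - wR W false i)) = ((compliers n W).card : ℝ) := by
    rw [← Finset.sum_subset (Finset.subset_univ (compliers n W))]
    · rw [Finset.card_eq_sum_ones (compliers n W), Nat.cast_sum]
      apply Finset.sum_congr rfl
      intro i hi
      simp only [compliers, Finset.mem_filter] at hi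
      simp [wR, hi.2.1, hi.2.2]
    · intro i _ hi
      simp [wR, key i hi]
  have hY : (∑ i ∈ compliers n W, (Y i true - Y i false))
      = ∑ i, (Y i (W i true) - Y i (W i false)) := by
    rw [← Finset.sum_subset (Finset.subset_univ (compliers n W))]
    · apply Finset.sum_congr rfl
      intro i hi
      simp only [compliers, Finset.mem_filter] at hi
      rw [hi.2.1, hi.2.2]
    · intro i _ hi
      rw [key i hi, sub_self]
  have hcR : ((compliers n W).card : ℝ) ≠ 0 := Nat.cast_ne_zero.mpr hco.ne'
  refine ⟨by rw [hW], ?_, ?_, hY⟩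
  · rw [← hY, sampCACE]
    field_simp
  · rw [hW, ← hY, sampCACE]
    field_simp
end
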